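/- Contraction principle for the nonlocal stationary problem: Let φ₁, φ₂ ∈ L¹(Ω,ν), let [u₁,v₁] be a subsolution of (GP_{φ₁}) and [u₂,v₂] a supersolution of (GP_{φ₂}). Then ∫_Ω (v₁ − v₂)⁺ dν ≤ ∫_Ω (φ₁ − φ₂)⁺ dν. -/

import Mathlib

open MeasureTheory
open scoped ENNReal

/-- A monotone graph in ℝ × ℝ, viewed as a set-valued map. -/
def MonotoneGraph (θ : ℝ → Set ℝ) : Prop :=
  ∀ ⦃x y u v : ℝ⦄, u ∈ θ x → v ∈ θ y → 0 ≤ (u - v) * (x - y)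

/-- A maximal monotone graph in ℝ × ℝ. -/
def MaximalMonotoneGraph (θ : ℝ → Set ℝ) : Prop :=
  MonotoneGraph θ ∧
    ∀ θ' : ℝ → Set ℝ, MonotoneGraph θ' → (∀ x, θ x ⊆ θ' x) → ∀ x, θ' x = θ x

/-!
Let `ρ` be the indicator of the set where `(u₁ - u₂, v₁ - v₂)` is lexicographically positive.
Subtracting the two inequalities, multiplying by `ρ` and integrating over `Ω` gives
`∫ (v₁ - v₂) ρ ≤ ∫ (φ₁ - φ₂) ρ + ∫∫ ρ(x) (a(x,y,u₁(y)-u₁(x)) - a(x,y,u₂(y)-u₂(x))) dm_x(y) dν(x)`.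
Monotonicity of `γ` and `β` turns the left side into `∫ (v₁ - v₂)⁺`, and `0 ≤ ρ ≤ 1` bounds the
data term by `∫ (φ₁ - φ₂)⁺`. Reversibility makes `ν ⊗ m` on `Ω × Ω` invariant under swapping the
coordinates, so by antisymmetry of `a` the double integral is half of
`-∫∫ (ρ(y) - ρ(x)) (a(x,y,u₁(y)-u₁(x)) - a(x,y,u₂(y)-u₂(x)))`, which is `≤ 0` because `ρ` is
nondecreasing in `u₁ - u₂` and `a` is increasing in its last argument.

The hypotheses on `a` hold only for `ν`-a.e. `x` and `m_x`-a.e. `y`; they pass to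
`ν ⊗ m`-a.e. pairs only through measurable sets, so the argument is run on measurable
representatives of `u₁, u₂, v₁, v₂`.
-/

open ProbabilityTheory

namespace MeasureTheory.Measure

variable {α β : Type*} [MeasurableSpace α] [MeasurableSpace β]

lemma quasiMeasurePreserving_fst_compProd (μ : Measure α) [SFinite μ] (κ : Kernel α β)
    [IsSFiniteKernel κ] :
    QuasiMeasurePreserving Prod.fst (μ ⊗ₘ κ) μ := by
  refine ⟨measurable_fst, AbsolutelyContinuous.mk fun s hs hμs => ?_⟩
  rw [map_apply measurable_fst hs, ← Set.prod_univ,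
    compProd_apply_prod hs MeasurableSet.univ, setLIntegral_measure_zero _ _ hμs]

lemma integrable_integral_compProd {μ : Measure α} [SFinite μ] {κ : Kernel α β}
    [IsSFiniteKernel κ] {f : α × β → ℝ} (hf : Integrable f (μ ⊗ₘ κ)) :
    Integrable (fun x => ∫ y, f (x, y) ∂(κ x)) μ := by
  simpa using hf.integral_compProd

end MeasureTheory.Measure

section Swap

variable {α : Type*} [MeasurableSpace α] {μ : Measure (α × α)}

lemma integral_nonpos_of_add_swap_nonpos (hμ : MeasurePreserving Prod.swap μ μ)
    {F : α × α → ℝ} (hF : Integrable F μ) (h : ∀ᵐ z ∂μ, F z + F z.swap ≤ 0) :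
    ∫ z, F z ∂μ ≤ 0 := by
  have hμ' : MeasurePreserving MeasurableEquiv.prodComm μ μ := hμ
  have hswap_int : Integrable (fun z => F z.swap) μ :=
    (hμ'.integrable_comp_emb MeasurableEquiv.prodComm.measurableEmbedding).2 hF
  have hswap : ∫ z, F z.swap ∂μ = ∫ z, F z ∂μ := hμ'.integral_comp' F
  have := integral_nonpos_of_ae h
  rw [integral_add hF hswap_int, hswap] at this
  linarith

end Swap

lemma integrable_of_lintegral_ofReal_rpow_lt_top {α : Type*} [MeasurableSpace α]
    {μ : Measure α} [IsFiniteMeasure μ] {f : α → ℝ} (hf : AEStronglyMeasurable f μ) {q : ℝ}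
    (hq : 1 ≤ q) (h : ∫⁻ z, ENNReal.ofReal (|f z| ^ q) ∂μ < ⊤) : Integrable f μ := by
  have hq0 : ENNReal.ofReal q ≠ 0 := by simp; linarith
  refine MemLp.integrable (q := ENNReal.ofReal q) (by simpa using hq) ⟨hf, ?_⟩
  rw [eLpNorm_lt_top_iff_lintegral_rpow_enorm_lt_top hq0 ENNReal.ofReal_ne_top]
  convert h using 3 with z
  rw [ENNReal.toReal_ofReal (by linarith), Real.enorm_eq_ofReal_abs,
    ENNReal.ofReal_rpow_of_nonneg (abs_nonneg _) (by linarith)]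

section Reversible

variable {X : Type*} [MeasurableSpace X]

/-- Reversibility of `ν` for the random walk `κ`: `dκ_x(y) dν(x) = dκ_y(x) dν(y)`. -/
def IsReversible (κ : Kernel X X) (ν : Measure X) : Prop :=
  ∀ f : X → X → ℝ≥0∞, Measurable (Function.uncurry f) →
    ∫⁻ x, ∫⁻ y, f x y ∂(κ x) ∂ν = ∫⁻ x, ∫⁻ y, f y x ∂(κ x) ∂ν

lemma lintegral_restrict_lintegral_restrict {κ : Kernel X X} {ν : Measure X} {Ω : Set X}
    (hΩ : MeasurableSet Ω) (f : X → X → ℝ≥0∞) :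
    ∫⁻ x in Ω, ∫⁻ y in Ω, f x y ∂(κ x) ∂ν
      = ∫⁻ x, ∫⁻ y, (Ω ×ˢ Ω).indicator (Function.uncurry f) (x, y) ∂(κ x) ∂ν := by
  rw [← lintegral_indicator hΩ]
  refine lintegral_congr fun x => ?_
  by_cases hx : x ∈ Ω
  · rw [Set.indicator_of_mem hx, ← lintegral_indicator hΩ]
    congr 1 with y
    by_cases hy : y ∈ Ω <;> simp [hx, hy]
  · simp [hx]

lemma IsReversible.measurePreserving_swap {κ : Kernel X X} [IsSFiniteKernel κ] {ν : Measure X}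
    (hκ : IsReversible κ ν) {Ω : Set X} (hΩ : MeasurableSet Ω) [SFinite (ν.restrict Ω)] :
    MeasurePreserving Prod.swap (ν.restrict Ω ⊗ₘ κ.restrict hΩ)
      (ν.restrict Ω ⊗ₘ κ.restrict hΩ) := by
  refine ⟨measurable_swap, Measure.ext_of_lintegral _ fun g hg => ?_⟩
  have hgΩ : Measurable (Function.uncurry fun x y => (Ω ×ˢ Ω).indicator g (x, y)) :=
    hg.indicator (hΩ.prod hΩ)
  rw [lintegral_map hg measurable_swap,
    Measure.lintegral_compProd (f := fun z => g z.swap) (hg.comp measurable_swap),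
    Measure.lintegral_compProd hg]
  simp only [Kernel.restrict_apply]
  rw [lintegral_restrict_lintegral_restrict hΩ, lintegral_restrict_lintegral_restrict hΩ]
  convert (hκ _ hgΩ).symm using 3 with x x
  · refine lintegral_congr fun y => ?_
    by_cases hx : x ∈ Ω <;> by_cases hy : y ∈ Ω <;> simp [hx, hy]
  · rfl

end Reversible

lemma strictMono_of_mul_sub_pos {f : ℝ → ℝ} (hf : ∀ r s, r ≠ s → 0 < (f r - f s) * (r - s)) :
    StrictMono f := fun r s h => by
  have := hf r s h.ne
  nlinarith

lemma sub_mul_sub_nonpos_of_strictMono {f : ℝ → ℝ} (hf : StrictMono f) {ρ₁ ρ₂ r s : ℝ}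
    (h₁ : s < r → ρ₁ ≤ ρ₂) (h₂ : r < s → ρ₂ ≤ ρ₁) : (ρ₁ - ρ₂) * (f r - f s) ≤ 0 := by
  rcases lt_trichotomy r s with h | rfl | h
  · exact mul_nonpos_of_nonneg_of_nonpos (sub_nonneg.2 (h₂ h)) (sub_nonpos.2 (hf h).le)
  · simp
  · exact mul_nonpos_of_nonpos_of_nonneg (sub_nonpos.2 (h₁ h)) (sub_nonneg.2 (hf h).le)

section LexPosSet

variable {X : Type*}

def lexPosSet (w d : X → ℝ) : Set X := {x | 0 < w x ∨ (w x = 0 ∧ 0 < d x)}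

lemma measurableSet_lexPosSet [MeasurableSpace X] {w d : X → ℝ} (hw : Measurable w)
    (hd : Measurable d) : MeasurableSet (lexPosSet w d) :=
  (measurableSet_lt measurable_const hw).union
    ((measurableSet_eq_fun hw measurable_const).inter (measurableSet_lt measurable_const hd))

lemma indicator_lexPosSet_le_of_lt {w d : X → ℝ} {x y : X} (h : w x < w y) :
    (lexPosSet w d).indicator (1 : X → ℝ) x ≤ (lexPosSet w d).indicator 1 y := by
  by_cases hx : x ∈ lexPosSet w d
  · have hy : y ∈ lexPosSet w d := by
      rcases hx with hx | hx
      exacts [Or.inl (hx.trans h), Or.inl (hx.1 ▸ h)]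
    simp [hx, hy]
  · simp only [Set.indicator_of_notMem hx]
    exact Set.indicator_nonneg (fun _ _ => zero_le_one) y

lemma mul_indicator_lexPosSet_eq_max {w d : X → ℝ} {x : X} (h : 0 ≤ d x * w x) :
    d x * (lexPosSet w d).indicator 1 x = max (d x) 0 := by
  by_cases hx : x ∈ lexPosSet w d
  · rw [Set.indicator_of_mem hx, Pi.one_apply, mul_one, max_eq_left]
    rcases hx with hx | hx
    exacts [nonneg_of_mul_nonneg_left h hx, hx.2.le]
  · rw [Set.indicator_of_notMem hx, mul_zero, eq_comm, max_eq_right_iff]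
    simp only [lexPosSet, Set.mem_ofPred_eq, not_or, not_and, not_lt] at hx
    rcases hx.1.lt_or_eq with hw | hw
    exacts [nonpos_of_mul_nonneg_left h hw, hx.2 hw]

lemma mul_indicator_one_le_max (s : Set X) (t : ℝ) (x : X) :
    t * s.indicator 1 x ≤ max t 0 := by
  by_cases hx : x ∈ s <;> simp [hx]

end LexPosSet

section Flux

variable {X : Type*} [MeasurableSpace X] {ν : Measure X} {η : Kernel X X}

/-- The integrand `a(x, y, u(y) - u(x))` of the nonlocal operator in `(GP_φ)`. -/
def nonlocalFlux (a : X → X → ℝ → ℝ) (u : X → ℝ) (z : X × X) : ℝ :=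
  a z.1 z.2 (u z.2 - u z.1)

lemma measurable_nonlocalFlux {a : X → X → ℝ → ℝ}
    (ha : Measurable fun z : X × X × ℝ => a z.1 z.2.1 z.2.2) {u : X → ℝ} (hu : Measurable u) :
    Measurable (nonlocalFlux a u) :=
  ha.comp (measurable_fst.prodMk (measurable_snd.prodMk
    ((hu.comp measurable_snd).sub (hu.comp measurable_fst))))

lemma ae_nonlocalFlux_add_swap_nonpos {a : X → X → ℝ → ℝ}
    (ha : Measurable fun z : X × X × ℝ => a z.1 z.2.1 z.2.2)
    (hasym : ∀ᵐ x ∂ν, ∀ᵐ y ∂(η x), ∀ r, a x y r = -a y x (-r))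
    (hmono : ∀ᵐ x ∂ν, ∀ᵐ y ∂(η x), StrictMono (a x y))
    {u₁ u₂ ρ : X → ℝ} (hu₁ : Measurable u₁) (hu₂ : Measurable u₂) (hρ : Measurable ρ)
    (hρu : ∀ x y, u₁ x - u₂ x < u₁ y - u₂ y → ρ x ≤ ρ y) :
    ∀ᵐ z ∂(ν ⊗ₘ η), ρ z.1 * (nonlocalFlux a u₁ z - nonlocalFlux a u₂ z)
      + ρ z.2 * (nonlocalFlux a u₁ z.swap - nonlocalFlux a u₂ z.swap) ≤ 0 := by
  have hF₁ := measurable_nonlocalFlux ha hu₁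
  have hF₂ := measurable_nonlocalFlux ha hu₂
  refine Measure.ae_compProd_of_ae_ae (measurableSet_le (Measurable.add
    ((hρ.comp measurable_fst).mul (hF₁.sub hF₂))
    ((hρ.comp measurable_snd).mul ((hF₁.comp measurable_swap).sub (hF₂.comp measurable_swap))))
    measurable_const) ?_
  filter_upwards [hasym, hmono] with x hax hmx
  filter_upwards [hax, hmx] with y hay hmy
  have hflux_swap (u : X → ℝ) : nonlocalFlux a u (y, x) = -nonlocalFlux a u (x, y) := by
    simp only [nonlocalFlux]
    rw [hay, neg_neg, neg_sub]
  rw [Prod.swap_prod_mk, hflux_swap, hflux_swap]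
  have := sub_mul_sub_nonpos_of_strictMono hmy (ρ₁ := ρ x) (ρ₂ := ρ y)
    (r := u₁ y - u₁ x) (s := u₂ y - u₂ x) (fun h => hρu x y (by linarith))
    (fun h => hρu y x (by linarith))
  simp only [nonlocalFlux] at this ⊢
  linarith

lemma nonlocalFlux_ae_eq [SFinite ν] [IsSFiniteKernel η]
    (hη : MeasurePreserving Prod.swap (ν ⊗ₘ η) (ν ⊗ₘ η)) (a : X → X → ℝ → ℝ) {u u' : X → ℝ}
    (h : u =ᵐ[ν] u') : nonlocalFlux a u =ᵐ[ν ⊗ₘ η] nonlocalFlux a u' := by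
  have hfst := Measure.quasiMeasurePreserving_fst_compProd ν η
  filter_upwards [hfst.ae_eq_comp h, (hfst.comp hη.quasiMeasurePreserving).ae_eq_comp h]
    with z h₁ h₂
  simp only [nonlocalFlux, Function.comp_apply, Prod.fst_swap] at h₁ h₂ ⊢
  rw [h₁, h₂]

lemma integrable_nonlocalFlux [IsFiniteMeasure ν] [IsFiniteKernel η]
    (hη : MeasurePreserving Prod.swap (ν ⊗ₘ η) (ν ⊗ₘ η)) {a : X → X → ℝ → ℝ}
    (ha : Measurable fun z : X × X × ℝ => a z.1 z.2.1 z.2.2) {u u' : X → ℝ}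
    (hu' : Measurable u') (h : u =ᵐ[ν] u') {q : ℝ} (hq : 1 ≤ q)
    (hF : ∫⁻ x, ∫⁻ y, ENNReal.ofReal (|a x y (u y - u x)| ^ q) ∂(η x) ∂ν < ⊤) :
    Integrable (nonlocalFlux a u') (ν ⊗ₘ η) := by
  have hF' := measurable_nonlocalFlux ha hu'
  refine integrable_of_lintegral_ofReal_rpow_lt_top hF'.aestronglyMeasurable hq ?_
  rw [Measure.lintegral_compProd (by fun_prop)]
  refine lt_of_eq_of_lt (lintegral_congr_ae ?_) hF
  filter_upwards [Measure.ae_ae_of_ae_compProd (nonlocalFlux_ae_eq hη a h)] with x hx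
  exact lintegral_congr_ae (hx.mono fun y hy => by simp only [← hy]; rfl)

lemma ae_sub_integral_nonlocalFlux_eq [SFinite ν] [IsSFiniteKernel η]
    (hη : MeasurePreserving Prod.swap (ν ⊗ₘ η) (ν ⊗ₘ η))
    (a : X → X → ℝ → ℝ) {u u' v v' : X → ℝ} (hu : u =ᵐ[ν] u') (hv : v =ᵐ[ν] v') :
    ∀ᵐ x ∂ν, v x - ∫ y, a x y (u y - u x) ∂(η x) = v' x - ∫ y, nonlocalFlux a u' (x, y) ∂(η x) := by
  filter_upwards [Measure.ae_ae_of_ae_compProd (nonlocalFlux_ae_eq hη a hu), hv] with x hx hvx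
  rw [hvx, ← integral_congr_ae hx]
  rfl

theorem integral_max_sub_le_of_measurable [SFinite ν] [IsSFiniteKernel η]
    (hη : MeasurePreserving Prod.swap (ν ⊗ₘ η) (ν ⊗ₘ η))
    {a : X → X → ℝ → ℝ} (ha : Measurable fun z : X × X × ℝ => a z.1 z.2.1 z.2.2)
    (hasym : ∀ᵐ x ∂ν, ∀ᵐ y ∂(η x), ∀ r, a x y r = -a y x (-r))
    (hmono : ∀ᵐ x ∂ν, ∀ᵐ y ∂(η x), StrictMono (a x y))
    {u₁ u₂ v₁ v₂ φ₁ φ₂ : X → ℝ} (hu₁ : Measurable u₁) (hu₂ : Measurable u₂)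
    (hv₁ : Measurable v₁) (hv₂ : Measurable v₂)
    (hv₁i : Integrable v₁ ν) (hv₂i : Integrable v₂ ν)
    (hφ₁ : Integrable φ₁ ν) (hφ₂ : Integrable φ₂ ν)
    (hgraph : ∀ᵐ x ∂ν, 0 ≤ (v₁ x - v₂ x) * (u₁ x - u₂ x))
    (hF₁ : Integrable (nonlocalFlux a u₁) (ν ⊗ₘ η))
    (hF₂ : Integrable (nonlocalFlux a u₂) (ν ⊗ₘ η))
    (hsub : ∀ᵐ x ∂ν, v₁ x - ∫ y, nonlocalFlux a u₁ (x, y) ∂(η x) ≤ φ₁ x)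
    (hsup : ∀ᵐ x ∂ν, φ₂ x ≤ v₂ x - ∫ y, nonlocalFlux a u₂ (x, y) ∂(η x)) :
    ∫ x, max (v₁ x - v₂ x) 0 ∂ν ≤ ∫ x, max (φ₁ x - φ₂ x) 0 ∂ν := by
  set S := lexPosSet (u₁ - u₂) (v₁ - v₂)
  set ρ : X → ℝ := S.indicator 1
  have hρ : Measurable ρ :=
    measurable_one.indicator (measurableSet_lexPosSet (hu₁.sub hu₂) (hv₁.sub hv₂))
  have hρ_nonneg (x : X) : 0 ≤ ρ x := Set.indicator_nonneg (fun _ _ => zero_le_one) x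
  have hρ_le (x : X) : ‖ρ x‖ ≤ 1 := by
    by_cases hx : x ∈ S <;> simp [ρ, hx]
  set G : X × X → ℝ := fun z => ρ z.1 * (nonlocalFlux a u₁ z - nonlocalFlux a u₂ z)
  have hG : Integrable G (ν ⊗ₘ η) :=
    (hF₁.sub hF₂).bdd_mul (hρ.comp measurable_fst).aestronglyMeasurable
      (ae_of_all _ fun z => hρ_le z.1)
  have hG_nonpos : ∫ z, G z ∂(ν ⊗ₘ η) ≤ 0 :=
    integral_nonpos_of_add_swap_nonpos hη hG <| ae_nonlocalFlux_add_swap_nonpos ha hasym hmono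
      hu₁ hu₂ hρ fun x y h => indicator_lexPosSet_le_of_lt h
  have hpointwise : ∀ᵐ x ∂ν,
      (v₁ x - v₂ x) * ρ x ≤ (φ₁ x - φ₂ x) * ρ x + ∫ y, G (x, y) ∂(η x) := by
    filter_upwards [hsub, hsup, ((Measure.integrable_compProd_iff hF₁.1).1 hF₁).1,
      ((Measure.integrable_compProd_iff hF₂.1).1 hF₂).1] with x h₁ h₂ hi₁ hi₂
    simp only [G]
    rw [integral_const_mul, integral_sub hi₁ hi₂]
    linarith [mul_nonneg (hρ_nonneg x) (sub_nonneg.2 h₁), mul_nonneg (hρ_nonneg x) (sub_nonneg.2 h₂)]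
  have hφρ : Integrable (fun x => (φ₁ x - φ₂ x) * ρ x) ν :=
    (hφ₁.sub hφ₂).mul_bdd hρ.aestronglyMeasurable (ae_of_all _ hρ_le)
  calc ∫ x, max (v₁ x - v₂ x) 0 ∂ν = ∫ x, (v₁ x - v₂ x) * ρ x ∂ν :=
        integral_congr_ae <| hgraph.mono fun x hx =>
          (mul_indicator_lexPosSet_eq_max (w := u₁ - u₂) (d := v₁ - v₂) hx).symm
    _ ≤ ∫ x, ((φ₁ x - φ₂ x) * ρ x + ∫ y, G (x, y) ∂(η x)) ∂ν :=
        integral_mono_ae ((hv₁i.sub hv₂i).mul_bdd hρ.aestronglyMeasurable (ae_of_all _ hρ_le))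
          (hφρ.add (Measure.integrable_integral_compProd hG)) hpointwise
    _ = ∫ x, (φ₁ x - φ₂ x) * ρ x ∂ν + ∫ z, G z ∂(ν ⊗ₘ η) := by
        rw [integral_add hφρ (Measure.integrable_integral_compProd hG),
          Measure.integral_compProd hG]
    _ ≤ ∫ x, max (φ₁ x - φ₂ x) 0 ∂ν + 0 :=
        add_le_add (integral_mono hφρ (hφ₁.sub hφ₂).pos_part
          fun x => mul_indicator_one_le_max S _ x) hG_nonpos
    _ = ∫ x, max (φ₁ x - φ₂ x) 0 ∂ν := add_zero _

end Flux

lemma ae_restrict_union_mul_sub_nonneg {X : Type*} [MeasurableSpace X] {ν : Measure X}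
    {Ω₁ Ω₂ : Set X} (h1 : MeasurableSet Ω₁) (h2 : MeasurableSet Ω₂) {γ β : ℝ → Set ℝ}
    (hγ : MonotoneGraph γ) (hβ : MonotoneGraph β) {u₁ v₁ u₂ v₂ : X → ℝ}
    (hγ₁ : ∀ᵐ x ∂ν, x ∈ Ω₁ → v₁ x ∈ γ (u₁ x)) (hβ₁ : ∀ᵐ x ∂ν, x ∈ Ω₂ → v₁ x ∈ β (u₁ x))
    (hγ₂ : ∀ᵐ x ∂ν, x ∈ Ω₁ → v₂ x ∈ γ (u₂ x)) (hβ₂ : ∀ᵐ x ∂ν, x ∈ Ω₂ → v₂ x ∈ β (u₂ x)) :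
    ∀ᵐ x ∂ν.restrict (Ω₁ ∪ Ω₂), 0 ≤ (v₁ x - v₂ x) * (u₁ x - u₂ x) := by
  refine (ae_restrict_iff' (h1.union h2)).2 ?_
  filter_upwards [hγ₁, hβ₁, hγ₂, hβ₂] with x hγ₁ hβ₁ hγ₂ hβ₂ hx
  rcases hx with hx | hx
  exacts [hγ (hγ₁ hx) (hγ₂ hx), hβ (hβ₁ hx) (hβ₂ hx)]

theorem stmt12_general {X : Type*} [MeasurableSpace X] (m : X → Measure X)
    (hprob : ∀ x, IsProbabilityMeasure (m x)) (hmeas : Measurable m)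
    (ν : Measure X)
    (hrev : ∀ f : X → X → ℝ≥0∞, Measurable (Function.uncurry f) →
      ∫⁻ x, ∫⁻ y, f x y ∂(m x) ∂ν = ∫⁻ x, ∫⁻ y, f y x ∂(m x) ∂ν)
    (Ω₁ Ω₂ : Set X) (h1 : MeasurableSet Ω₁) (h2 : MeasurableSet Ω₂)
    (hfin : ν (Ω₁ ∪ Ω₂) < ⊤)
    (p p' : ℝ) (hp : 1 < p) (hp' : 1 / p + 1 / p' = 1)
    (a : X → X → ℝ → ℝ)
    (hameas : Measurable (fun z : X × X × ℝ => a z.1 z.2.1 z.2.2))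
    (hasym : ∀ᵐ x ∂ν, ∀ᵐ y ∂(m x), ∀ r : ℝ, a x y r = - a y x (-r))
    (hmono : ∀ᵐ x ∂ν, ∀ᵐ y ∂(m x), ∀ r s : ℝ, r ≠ s → 0 < (a x y r - a x y s) * (r - s))
    (γ β : ℝ → Set ℝ) (hγ : MaximalMonotoneGraph γ) (hβ : MaximalMonotoneGraph β)
    (φ₁ φ₂ : X → ℝ)
    (hφ₁ : Integrable φ₁ (ν.restrict (Ω₁ ∪ Ω₂)))
    (hφ₂ : Integrable φ₂ (ν.restrict (Ω₁ ∪ Ω₂)))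
    (u₁ v₁ u₂ v₂ : X → ℝ)
    (hu₁ : MemLp u₁ (ENNReal.ofReal p) (ν.restrict (Ω₁ ∪ Ω₂)))
    (hv₁ : Integrable v₁ (ν.restrict (Ω₁ ∪ Ω₂)))
    (hu₂ : MemLp u₂ (ENNReal.ofReal p) (ν.restrict (Ω₁ ∪ Ω₂)))
    (hv₂ : Integrable v₂ (ν.restrict (Ω₁ ∪ Ω₂)))
    (hγ₁ : ∀ᵐ x ∂ν, x ∈ Ω₁ → v₁ x ∈ γ (u₁ x))
    (hβ₁ : ∀ᵐ x ∂ν, x ∈ Ω₂ → v₁ x ∈ β (u₁ x))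
    (hγ₂ : ∀ᵐ x ∂ν, x ∈ Ω₁ → v₂ x ∈ γ (u₂ x))
    (hβ₂ : ∀ᵐ x ∂ν, x ∈ Ω₂ → v₂ x ∈ β (u₂ x))
    (hF₁ : ∫⁻ x in Ω₁ ∪ Ω₂, ∫⁻ y in Ω₁ ∪ Ω₂,
        ENNReal.ofReal (|a x y (u₁ y - u₁ x)| ^ p') ∂(m x) ∂ν < ⊤)
    (hF₂ : ∫⁻ x in Ω₁ ∪ Ω₂, ∫⁻ y in Ω₁ ∪ Ω₂,
        ENNReal.ofReal (|a x y (u₂ y - u₂ x)| ^ p') ∂(m x) ∂ν < ⊤)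
    (hsub : ∀ᵐ x ∂ν, x ∈ Ω₁ ∪ Ω₂ →
        v₁ x - ∫ y in Ω₁ ∪ Ω₂, a x y (u₁ y - u₁ x) ∂(m x) ≤ φ₁ x)
    (hsup : ∀ᵐ x ∂ν, x ∈ Ω₁ ∪ Ω₂ →
        φ₂ x ≤ v₂ x - ∫ y in Ω₁ ∪ Ω₂, a x y (u₂ y - u₂ x) ∂(m x)) :
    ∫ x in Ω₁ ∪ Ω₂, max (v₁ x - v₂ x) 0 ∂ν
      ≤ ∫ x in Ω₁ ∪ Ω₂, max (φ₁ x - φ₂ x) 0 ∂ν := by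
  set Ω := Ω₁ ∪ Ω₂
  have hΩ : MeasurableSet Ω := h1.union h2
  have : IsFiniteMeasure (ν.restrict Ω) := isFiniteMeasure_restrict.2 hfin.ne
  let κ : Kernel X X := ⟨m, hmeas⟩
  have : IsMarkovKernel κ := ⟨hprob⟩
  have hswap := IsReversible.measurePreserving_swap (κ := κ) hrev hΩ
  have hp'1 : 1 ≤ p' :=
    (Real.holderConjugate_iff.2 ⟨hp, by simpa only [one_div] using hp'⟩).symm.lt.le
  obtain ⟨u₁', hu₁', hu₁e⟩ := hu₁.1.aemeasurable
  obtain ⟨u₂', hu₂', hu₂e⟩ := hu₂.1.aemeasurable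
  obtain ⟨v₁', hv₁', hv₁e⟩ := hv₁.1.aemeasurable
  obtain ⟨v₂', hv₂', hv₂e⟩ := hv₂.1.aemeasurable
  calc ∫ x in Ω, max (v₁ x - v₂ x) 0 ∂ν = ∫ x in Ω, max (v₁' x - v₂' x) 0 ∂ν :=
        integral_congr_ae (by filter_upwards [hv₁e, hv₂e] with x e₁ e₂; rw [e₁, e₂])
    _ ≤ ∫ x in Ω, max (φ₁ x - φ₂ x) 0 ∂ν := integral_max_sub_le_of_measurable hswap hameas
        (ae_restrict_of_ae (hasym.mono fun x hx => ae_restrict_of_ae hx))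
        (ae_restrict_of_ae (hmono.mono fun x hx =>
          ae_restrict_of_ae (hx.mono fun y hy => strictMono_of_mul_sub_pos hy)))
        hu₁' hu₂' hv₁' hv₂' (hv₁.congr hv₁e) (hv₂.congr hv₂e) hφ₁ hφ₂
        (by filter_upwards [ae_restrict_union_mul_sub_nonneg h1 h2 hγ.1 hβ.1 hγ₁ hβ₁ hγ₂ hβ₂,
              hu₁e, hu₂e, hv₁e, hv₂e] with x h e₁ e₂ e₃ e₄
            rwa [← e₁, ← e₂, ← e₃, ← e₄])
        (integrable_nonlocalFlux hswap hameas hu₁' hu₁e hp'1 hF₁)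
        (integrable_nonlocalFlux hswap hameas hu₂' hu₂e hp'1 hF₂)
        (by filter_upwards [ae_restrict_of_ae hsub, ae_restrict_mem hΩ,
              ae_sub_integral_nonlocalFlux_eq hswap a hu₁e hv₁e] with x h hx e
            exact e ▸ h hx)
        (by filter_upwards [ae_restrict_of_ae hsup, ae_restrict_mem hΩ,
              ae_sub_integral_nonlocalFlux_eq hswap a hu₂e hv₂e] with x h hx e
            exact e ▸ h hx)

/-- Contraction principle for the nonlocal stationary problem `(GP_φ)`: if `[u₁,v₁]` is a
subsolution for data `φ₁` and `[u₂,v₂]` a supersolution for data `φ₂`, then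
`∫_Ω (v₁ - v₂)⁺ dν ≤ ∫_Ω (φ₁ - φ₂)⁺ dν`, where `Ω = Ω₁ ∪ Ω₂`. -/
theorem stmt12 {X : Type*} [MeasurableSpace X] (m : X → Measure X)
    (hprob : ∀ x, IsProbabilityMeasure (m x)) (hmeas : Measurable m)
    (ν : Measure X)
    (hrev : ∀ f : X → X → ℝ≥0∞, Measurable (Function.uncurry f) →
      ∫⁻ x, ∫⁻ y, f x y ∂(m x) ∂ν = ∫⁻ x, ∫⁻ y, f y x ∂(m x) ∂ν)
    (Ω₁ Ω₂ : Set X) (h1 : MeasurableSet Ω₁) (h2 : MeasurableSet Ω₂)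
    (hdisj : Disjoint Ω₁ Ω₂) (hfin : ν (Ω₁ ∪ Ω₂) < ⊤)
    (hconn : ∀ A B : Set X, MeasurableSet A → MeasurableSet B →
      A ⊆ Ω₁ ∪ Ω₂ → B ⊆ Ω₁ ∪ Ω₂ → ν A ≠ 0 → ν B ≠ 0 → A ∪ B = Ω₁ ∪ Ω₂ →
      0 < ∫⁻ x in A, m x B ∂ν)
    (p p' cp Cp : ℝ) (hp : 1 < p) (hp' : 1 / p + 1 / p' = 1)
    (hcp : 0 < cp) (hCp : 0 < Cp)
    (a : X → X → ℝ → ℝ)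
    (hameas : Measurable (fun z : X × X × ℝ => a z.1 z.2.1 z.2.2))
    (hcont : ∀ᵐ x ∂ν, ∀ᵐ y ∂(m x), Continuous (a x y))
    (hasym : ∀ᵐ x ∂ν, ∀ᵐ y ∂(m x), ∀ r : ℝ, a x y r = - a y x (-r))
    (hmono : ∀ᵐ x ∂ν, ∀ᵐ y ∂(m x), ∀ r s : ℝ, r ≠ s → 0 < (a x y r - a x y s) * (r - s))
    (hgrowth : ∀ᵐ x ∂ν, ∀ᵐ y ∂(m x), ∀ r : ℝ, |a x y r| ≤ Cp * (1 + |r| ^ (p - 1)))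
    (hcoer : ∀ᵐ x ∂ν, ∀ᵐ y ∂(m x), ∀ r : ℝ, cp * |r| ^ p ≤ a x y r * r)
    (γ β : ℝ → Set ℝ) (hγ : MaximalMonotoneGraph γ) (hβ : MaximalMonotoneGraph β)
    (hγ0 : (0 : ℝ) ∈ γ 0) (hβ0 : (0 : ℝ) ∈ β 0)
    (φ₁ φ₂ : X → ℝ)
    (hφ₁ : Integrable φ₁ (ν.restrict (Ω₁ ∪ Ω₂)))
    (hφ₂ : Integrable φ₂ (ν.restrict (Ω₁ ∪ Ω₂)))
    (u₁ v₁ u₂ v₂ : X → ℝ)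
    (hu₁ : MemLp u₁ (ENNReal.ofReal p) (ν.restrict (Ω₁ ∪ Ω₂)))
    (hv₁ : Integrable v₁ (ν.restrict (Ω₁ ∪ Ω₂)))
    (hu₂ : MemLp u₂ (ENNReal.ofReal p) (ν.restrict (Ω₁ ∪ Ω₂)))
    (hv₂ : Integrable v₂ (ν.restrict (Ω₁ ∪ Ω₂)))
    (hγ₁ : ∀ᵐ x ∂ν, x ∈ Ω₁ → v₁ x ∈ γ (u₁ x))
    (hβ₁ : ∀ᵐ x ∂ν, x ∈ Ω₂ → v₁ x ∈ β (u₁ x))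
    (hγ₂ : ∀ᵐ x ∂ν, x ∈ Ω₁ → v₂ x ∈ γ (u₂ x))
    (hβ₂ : ∀ᵐ x ∂ν, x ∈ Ω₂ → v₂ x ∈ β (u₂ x))
    (hF₁ : ∫⁻ x in Ω₁ ∪ Ω₂, ∫⁻ y in Ω₁ ∪ Ω₂,
        ENNReal.ofReal (|a x y (u₁ y - u₁ x)| ^ p') ∂(m x) ∂ν < ⊤)
    (hF₂ : ∫⁻ x in Ω₁ ∪ Ω₂, ∫⁻ y in Ω₁ ∪ Ω₂,
        ENNReal.ofReal (|a x y (u₂ y - u₂ x)| ^ p') ∂(m x) ∂ν < ⊤)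
    (hsub : ∀ᵐ x ∂ν, x ∈ Ω₁ ∪ Ω₂ →
        v₁ x - ∫ y in Ω₁ ∪ Ω₂, a x y (u₁ y - u₁ x) ∂(m x) ≤ φ₁ x)
    (hsup : ∀ᵐ x ∂ν, x ∈ Ω₁ ∪ Ω₂ →
        φ₂ x ≤ v₂ x - ∫ y in Ω₁ ∪ Ω₂, a x y (u₂ y - u₂ x) ∂(m x)) :
    ∫ x in Ω₁ ∪ Ω₂, max (v₁ x - v₂ x) 0 ∂ν
      ≤ ∫ x in Ω₁ ∪ Ω₂, max (φ₁ x - φ₂ x) 0 ∂ν :=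
  stmt12_general m hprob hmeas ν hrev Ω₁ Ω₂ h1 h2 hfin p p' hp hp' a hameas hasym hmono γ β hγ hβ φ₁
    φ₂ hφ₁ hφ₂ u₁ v₁ u₂ v₂ hu₁ hv₁ hu₂ hv₂ hγ₁ hβ₁ hγ₂ hβ₂ hF₁ hF₂ hsub hsup
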